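/- With A a *-algebra and Ω¹ a right and left fgp *-bimodule as above, and ⊛: 𝔛^R → 𝔛^L defined by ev^R(ω, x^⊛) = (ev^L(x, ω*))*, the coevaluations are related by star: ω_i* ⊗ x_i^⊛ = coev^R(1), i.e. applying star to the first leg and ⊛ to the second leg of the left coevaluation yields the right coevaluation. -/

import Mathlib

/-!
Insert `coev^R(1)` into the second leg, `ωᵢ* = ∑ⱼ yⱼ(ωᵢ*) ηⱼ`, and move the coefficients across
the balanced tensor sign. The first legs then recombine as `∑ᵢ xᵢ^⊛ · yⱼ(ωᵢ*) = yⱼ`: this is the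
left snake identity applied to the right module map `yⱼ^⊛`, starred.
-/

open TensorProduct

noncomputable section

variable (A : Type) [Ring A] [Algebra ℂ A] [StarRing A] [StarModule ℂ A]
variable (Ω : Type) [AddCommGroup Ω] [Module ℂ Ω]
variable (l : A → Ω → Ω) (r : Ω → A → Ω) (sΩ : Ω → Ω)

/-- The map `⊛ : 𝔛^R → 𝔛^L`, `x^⊛(ω) = (x(ω*))*`. -/
def bstar (x : Ω → A) : Ω → A := fun ω => star (x (sΩ ω))

/-- The relations defining the balanced tensor product `𝔛^L ⊗_A Ω¹` as a quotient of the
tensor product over `ℂ`, where the right action on maps `y : Ω¹ → A` is `(y a)(ω) = y(ω) a`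
and the left action on `Ω¹` is `l`. -/
def relT : Submodule ℂ ((Ω → A) ⊗[ℂ] Ω) :=
  Submodule.span ℂ
    {z | ∃ (g : Ω → A) (a : A) (ω : Ω),
      z = (fun ν => g ν * a) ⊗ₜ[ℂ] ω - g ⊗ₜ[ℂ] (l a ω)}

end

section Bstar

variable {A : Type} [Ring A] [StarRing A] {Ω : Type} {sΩ : Ω → Ω}

theorem bstar_map_mul_right {l : A → Ω → Ω} {r : Ω → A → Ω}
    (hs_r : ∀ a ω, sΩ (r ω a) = l (star a) (sΩ ω))
    {y : Ω → A} (hy : ∀ a ω, y (l a ω) = a * y ω) (ω : Ω) (a : A) :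
    bstar A Ω sΩ y (r ω a) = bstar A Ω sΩ y ω * a := by
  simp only [bstar, hs_r, hy, star_mul, star_star]

variable [Module ℂ A] [StarModule ℂ A] [AddCommGroup Ω] [Module ℂ Ω]

theorem isLinearMap_bstar (hs_add : ∀ ω η, sΩ (ω + η) = sΩ ω + sΩ η)
    (hs_smul : ∀ (c : ℂ) ω, sΩ (c • ω) = (starRingEnd ℂ c) • sΩ ω)
    {y : Ω → A} (hy : IsLinearMap ℂ y) : IsLinearMap ℂ (bstar A Ω sΩ y) where
  map_add ω η := by simp only [bstar, hs_add, hy.map_add, star_add]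
  map_smul c ω := by
    simp only [bstar, hs_smul, hy.map_smul, star_smul, starRingEnd_apply, star_star]

theorem eq_sum_bstar_mul {l : A → Ω → Ω} {r : Ω → A → Ω}
    (hs_add : ∀ ω η, sΩ (ω + η) = sΩ ω + sΩ η)
    (hs_smul : ∀ (c : ℂ) ω, sΩ (c • ω) = (starRingEnd ℂ c) • sΩ ω)
    (hs_invol : ∀ ω, sΩ (sΩ ω) = ω)
    (hs_r : ∀ a ω, sΩ (r ω a) = l (star a) (sΩ ω))
    {ι : Type} [Fintype ι] (ωb : ι → Ω) (xb : ι → Ω → A)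
    (hsnakeL₂ : ∀ x : Ω → A, IsLinearMap ℂ x → (∀ ω a, x (r ω a) = x ω * a) →
      ∀ ω, x ω = ∑ i, x (ωb i) * xb i ω)
    {y : Ω → A} (hy_lin : IsLinearMap ℂ y) (hy_mod : ∀ a ω, y (l a ω) = a * y ω) :
    y = ∑ i, fun ν => bstar A Ω sΩ (xb i) ν * y (sΩ (ωb i)) := by
  funext ν
  have h := congrArg star <| hsnakeL₂ _ (isLinearMap_bstar hs_add hs_smul hy_lin)
    (bstar_map_mul_right hs_r hy_mod) (sΩ ν)
  rw [Finset.sum_apply]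
  simpa only [bstar, hs_invol, star_star, star_sum, star_mul] using h

end Bstar

section BalancedTensor

variable {A : Type} [Ring A] [Algebra ℂ A] {Ω : Type} [AddCommGroup Ω] [Module ℂ Ω]
  (l : A → Ω → Ω)

theorem relT_mkQ_mul_tmul (g : Ω → A) (a : A) (ω : Ω) :
    (relT A Ω l).mkQ ((fun ν => g ν * a) ⊗ₜ[ℂ] ω) = (relT A Ω l).mkQ (g ⊗ₜ[ℂ] l a ω) := by
  rw [Submodule.mkQ_apply, Submodule.mkQ_apply, Submodule.Quotient.eq]
  exact Submodule.subset_span ⟨g, a, ω, rfl⟩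

theorem relT_mkQ_tmul_eq_sum {κ : Type} [Fintype κ] (yb : κ → Ω → A) (ηb : κ → Ω)
    (hsnakeR₁ : ∀ ω : Ω, (∑ j, l (yb j ω) (ηb j)) = ω) (g : Ω → A) (ω : Ω) :
    (relT A Ω l).mkQ (g ⊗ₜ[ℂ] ω) =
      ∑ j, (relT A Ω l).mkQ ((fun ν => g ν * yb j ω) ⊗ₜ[ℂ] ηb j) := by
  conv_lhs => rw [← hsnakeR₁ ω]
  simp only [tmul_sum, map_sum, relT_mkQ_mul_tmul]

end BalancedTensor

variable (A : Type) [Ring A] [Algebra ℂ A] [StarRing A] [StarModule ℂ A]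
variable (Ω : Type) [AddCommGroup Ω] [Module ℂ Ω]
variable (l : A → Ω → Ω) (r : Ω → A → Ω) (sΩ : Ω → Ω)

theorem coev_star_eq_coevR
    -- the star structure on Ω
    (hs_add : ∀ ω η, sΩ (ω + η) = sΩ ω + sΩ η)
    (hs_smul : ∀ (c : ℂ) ω, sΩ (c • ω) = (starRingEnd ℂ c) • sΩ ω)
    (hs_invol : ∀ ω, sΩ (sΩ ω) = ω)
    (hs_r : ∀ a ω, sΩ (r ω a) = l (star a) (sΩ ω))
    -- the f.g.p. data
    (ι κ : Type) [Fintype ι] [Fintype κ]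
    (ωb : ι → Ω) (xb : ι → Ω → A) (yb : κ → Ω → A) (ηb : κ → Ω)
    (hsnakeL₂ : ∀ x : Ω → A, IsLinearMap ℂ x → (∀ ω a, x (r ω a) = x ω * a) →
      ∀ ω, x ω = ∑ i, x (ωb i) * xb i ω)
    (hyb_lin : ∀ j, IsLinearMap ℂ (yb j))
    (hyb_mod : ∀ j a ω, yb j (l a ω) = a * yb j ω)
    (hsnakeR₁ : ∀ ω : Ω, (∑ j, l (yb j ω) (ηb j)) = ω) :
    (relT A Ω l).mkQ (∑ i, (bstar A Ω sΩ (xb i)) ⊗ₜ[ℂ] sΩ (ωb i)) =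
      (relT A Ω l).mkQ (∑ j, (yb j) ⊗ₜ[ℂ] ηb j) := by
  simp only [map_sum, relT_mkQ_tmul_eq_sum l yb ηb hsnakeR₁ (bstar A Ω sΩ _)]
  rw [Finset.sum_comm]
  refine Finset.sum_congr rfl fun j _ => ?_
  rw [← map_sum, ← sum_tmul,
    ← eq_sum_bstar_mul hs_add hs_smul hs_invol hs_r ωb xb hsnakeL₂ (hyb_lin j) (hyb_mod j)]
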